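/- arXiv:1604.00581 — 11 statements merged into one kernel-verified Lean document; each statement's English description precedes it below -/
import Mathlib

section
/- The intertwining relation U L = L T̃ holds as maps from K₁² to K₂, where L(f,g) = d_A* f + d_B* g and T̃ = [[0, -I],[I, 2T]]. -/
/-!
Column by column, `U L = L T̃` says `U d_A^* = d_B^*` and `U d_B^* = 2 d_B^* T - d_A^*`.
Since `d_A d_A^* = 1`, the operator `2 d_A^* d_A - 1` fixes `d_A^*`, which gives the first column
because `d_B^* = S d_A^*`. For the second, `S² = 1` turns `S (2 d_A^* d_A - 1) S d_A^*` into
`2 (S d_A^*) (d_A S d_A^*) - d_A^*`.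
-/

open ContinuousLinearMap

section

variable {𝕜 E F : Type*} [RCLike 𝕜] [NormedAddCommGroup E] [NormedSpace 𝕜 E]
  [NormedAddCommGroup F] [NormedSpace 𝕜 F]

theorem comp_eq_comp_of_companion_columns {U : E →L[𝕜] E} {a b : F →L[𝕜] E} {T : F →L[𝕜] F}
    {L : F × F →L[𝕜] E} (hL : ∀ f g, L (f, g) = a f + b g)
    {Ttil : F × F →L[𝕜] F × F} (hTtil : ∀ f g, Ttil (f, g) = (-g, f + (2 : 𝕜) • T g))
    (ha : U ∘L a = b) (hb : U ∘L b = (2 : 𝕜) • b ∘L T - a) :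
    U ∘L L = L ∘L Ttil := by
  refine ContinuousLinearMap.ext fun ⟨f, g⟩ => ?_
  have ha' : U (a f) = b f := congrArg (· f) ha
  have hb' : U (b g) = (2 : 𝕜) • b (T g) - a g := congrArg (· g) hb
  simp only [comp_apply, hL, hTtil, map_add, map_neg, map_smul, ha', hb']
  module

theorem two_smul_comp_sub_one_comp_of_comp_eq_one {a : F →L[𝕜] E} {b : E →L[𝕜] F}
    (h : b ∘L a = 1) : ((2 : 𝕜) • (a ∘L b) - 1) ∘L a = a := by
  rw [sub_comp, smul_comp, comp_assoc, h, one_def, one_def, comp_id, id_comp, two_smul,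
    add_sub_cancel_right]

end

theorem stmt2 {K₁ K₂ : Type*}
    [NormedAddCommGroup K₁] [InnerProductSpace ℂ K₁] [FiniteDimensional ℂ K₁]
    [NormedAddCommGroup K₂] [InnerProductSpace ℂ K₂] [FiniteDimensional ℂ K₂]
    (S : K₂ →L[ℂ] K₂) (hS : IsSelfAdjoint S) (hSu : S ∈ unitary (K₂ →L[ℂ] K₂))
    (dA : K₂ →L[ℂ] K₁) (h : dA ∘L adjoint dA = 1)
    (dB : K₂ →L[ℂ] K₁) (hdB : dB = dA ∘L S)
    (T : K₁ →L[ℂ] K₁) (hT : T = dA ∘L adjoint dB)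
    (U : K₂ →L[ℂ] K₂) (hU : U = S ∘L ((2:ℂ) • (adjoint dA ∘L dA) - 1))
    (L : K₁ × K₁ →L[ℂ] K₂) (hL : ∀ f g : K₁, L (f, g) = adjoint dA f + adjoint dB g)
    (Ttil : K₁ × K₁ →L[ℂ] K₁ × K₁)
    (hTtil : ∀ f g : K₁, Ttil (f, g) = (-g, f + (2:ℂ) • T g)) :
    U ∘L L = L ∘L Ttil := by
  have hSS : S ∘L S = 1 := by simpa [hS.star_eq, mul_def] using Unitary.star_mul_self_of_mem hSu
  have hdB' : adjoint dB = S ∘L adjoint dA := by rw [hdB, adjoint_comp, hS.adjoint_eq]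
  have hreflect := two_smul_comp_sub_one_comp_of_comp_eq_one h
  refine comp_eq_comp_of_companion_columns hL hTtil ?_ ?_
  · rw [hU, hdB', comp_assoc, hreflect]
  · rw [hU, hT, hdB', comp_assoc, sub_comp, comp_sub, one_def, id_comp, ← comp_assoc S S, hSS,
      one_def, id_comp, smul_comp, comp_smul]
    simp only [comp_assoc]
end

section
/- The subspace 𝓛 := range(L) = d_A* K₁ + d_B* K₁ is invariant under U, and in fact U(𝓛) = 𝓛. -/
open ContinuousLinearMap

/-!
Since `d_A d_A* = 1` and `S² = 1`, one computes `U d_A* = S d_A* = d_B*` and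
`U d_B* = 2 d_B* (d_A d_B*) - d_A*`. Hence `U ∘ L = L ∘ T` with `T (f, g) = (-g, f + 2 d_A d_B* g)`,
and `T` is surjective, so `U` maps `range L` onto itself.
-/

theorem IsSelfAdjoint.mul_self_eq_one_of_mem_unitary {R : Type*} [Monoid R] [StarMul R] {S : R}
    (hS : IsSelfAdjoint S) (hSu : S ∈ unitary R) : S * S = 1 := by
  simpa only [hS.star_eq] using Unitary.star_mul_self_of_mem hSu

theorem Prod.surjective_neg_snd_fst_add {M : Type*} [AddGroup M] (N : M → M) :
    Function.Surjective fun p : M × M => (-p.2, p.1 + N p.2) := fun q =>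
  ⟨(q.2 - N (-q.1), -q.1), by simp⟩

section Adjoint

variable {𝕜 E F : Type*} [RCLike 𝕜]
  [NormedAddCommGroup E] [InnerProductSpace 𝕜 E] [CompleteSpace E]
  [NormedAddCommGroup F] [InnerProductSpace 𝕜 F] [CompleteSpace F]
  {S : E →L[𝕜] E} {dA : E →L[𝕜] F}

theorem adjoint_comp_of_isSelfAdjoint (hS : IsSelfAdjoint S) :
    adjoint (dA ∘L S) = S ∘L adjoint dA := by
  rw [adjoint_comp, hS.adjoint_eq]

theorem two_smul_adjoint_comp_sub_one_comp_adjoint (h : dA ∘L adjoint dA = 1) :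
    ((2 : 𝕜) • (adjoint dA ∘L dA) - 1) ∘L adjoint dA = adjoint dA := by
  simp only [sub_comp, smul_comp, comp_assoc, h, one_def, comp_id, id_comp]
  rw [two_smul, add_sub_cancel_right]

theorem comp_two_smul_adjoint_comp_sub_one_comp_comp_adjoint (hS2 : S ∘L S = 1) :
    S ∘L ((2 : 𝕜) • (adjoint dA ∘L dA) - 1) ∘L S ∘L adjoint dA =
      S ∘L adjoint dA ∘L ((2 : 𝕜) • (dA ∘L S ∘L adjoint dA)) - adjoint dA := by
  simp only [sub_comp, smul_comp, comp_sub, comp_smul, comp_assoc, one_def, id_comp]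
  rw [← comp_assoc S S, hS2, one_def, id_comp]

end Adjoint

theorem stmt4 {K₁ K₂ : Type*}
    [NormedAddCommGroup K₁] [InnerProductSpace ℂ K₁] [FiniteDimensional ℂ K₁]
    [NormedAddCommGroup K₂] [InnerProductSpace ℂ K₂] [FiniteDimensional ℂ K₂]
    (S : K₂ →L[ℂ] K₂) (hS : IsSelfAdjoint S) (hSu : S ∈ unitary (K₂ →L[ℂ] K₂))
    (dA : K₂ →L[ℂ] K₁) (h : dA ∘L adjoint dA = 1)
    (dB : K₂ →L[ℂ] K₁) (hdB : dB = dA ∘L S)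
    (U : K₂ →L[ℂ] K₂) (hU : U = S ∘L ((2:ℂ) • (adjoint dA ∘L dA) - 1))
    (L : K₁ × K₁ →L[ℂ] K₂) (hL : ∀ f g : K₁, L (f, g) = adjoint dA f + adjoint dB g) :
    U '' (Set.range L) = Set.range L := by
  have hdB' : adjoint dB = S ∘L adjoint dA := hdB ▸ adjoint_comp_of_isSelfAdjoint hS
  have hUA : U ∘L adjoint dA = adjoint dB := by
    rw [hU, hdB', comp_assoc, two_smul_adjoint_comp_sub_one_comp_adjoint h]
  have hUB : U ∘L adjoint dB = adjoint dB ∘L ((2 : ℂ) • (dA ∘L adjoint dB)) - adjoint dA := by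
    rw [hU, hdB', comp_assoc, comp_assoc]
    exact comp_two_smul_adjoint_comp_sub_one_comp_comp_adjoint
      (hS.mul_self_eq_one_of_mem_unitary hSu)
  have intertwine : U ∘ L = L ∘ fun p => (-p.2, p.1 + (2 : ℂ) • dA (adjoint dB p.2)) := by
    funext ⟨f, g⟩
    have hf := DFunLike.congr_fun hUA f
    have hg := DFunLike.congr_fun hUB g
    simp only [comp_apply, sub_apply, smul_apply] at hf hg
    simp only [Function.comp_apply, hL, map_add, hf, hg, map_neg, map_smul]
    abel
  rw [← Set.range_comp, intertwine]
  exact (Prod.surjective_neg_snd_fst_add fun g => (2 : ℂ) • dA (adjoint dB g)).range_comp L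
end

section
/- The kernel of L equals the kernel of I - T̃², where L(f,g) = d_A* f + d_B* g and T̃(f,g) = (-g, f + 2Tg). -/
/-!
Write `u = f + T g` and `v = T f + g`. Since `d_A d_A* = d_B d_B* = 1` and `T = d_A d_B*` is
self-adjoint, `d_A L(f, g) = u` and `d_B L(f, g) = v`; conversely `u = v = 0` forces `L(f, g) = 0`
because `‖L(f, g)‖² = ⟪f, d_A L(f, g)⟫ + ⟪g, d_B L(f, g)⟫`. On the other side a direct computation
gives `(1 - T̃²)(f, g) = 2 (u, v - 2 T u)`, which vanishes exactly when `u = v = 0`.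
-/

open ContinuousLinearMap

section Companion

variable {R M : Type*} [Field R] [AddCommGroup M] [Module R M]

-- The operator `T̃` of the paper.
def companion (T : M →ₗ[R] M) : M × M →ₗ[R] M × M :=
  (-LinearMap.snd R M M).prod (LinearMap.fst R M M + (2 : R) • T ∘ₗ LinearMap.snd R M M)

@[simp]
theorem companion_apply (T : M →ₗ[R] M) (f g : M) :
    companion T (f, g) = (-g, f + (2 : R) • T g) := by
  simp [companion]

theorem sub_companion_companion (T : M →ₗ[R] M) (f g : M) :
    (f, g) - companion T (companion T (f, g)) =
      (2 : R) • (f + T g, (T f + g) - (2 : R) • T (f + T g)) := by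
  simp only [companion_apply, map_add, map_smul, Prod.mk_sub_mk, Prod.smul_mk]
  ext <;> module

theorem companion_companion_eq_self_iff [NeZero (2 : R)] (T : M →ₗ[R] M) (f g : M) :
    companion T (companion T (f, g)) = (f, g) ↔ f + T g = 0 ∧ T f + g = 0 := by
  rw [← sub_eq_zero, ← neg_eq_zero, neg_sub, sub_companion_companion, smul_eq_zero,
    or_iff_right two_ne_zero, Prod.mk_eq_zero]
  constructor
  · rintro ⟨h₁, h₂⟩
    rw [h₁, map_zero, smul_zero, sub_zero] at h₂
    exact ⟨h₁, h₂⟩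
  · rintro ⟨h₁, h₂⟩
    simp [h₁, h₂]

end Companion

section Adjoint

variable {𝕜 E F : Type*} [RCLike 𝕜]
  [NormedAddCommGroup E] [InnerProductSpace 𝕜 E] [CompleteSpace E]
  [NormedAddCommGroup F] [InnerProductSpace 𝕜 F] [CompleteSpace F]

theorem adjoint_add_adjoint_eq_zero_iff (A B : F →L[𝕜] E) (f g : E) :
    adjoint A f + adjoint B g = 0 ↔
      A (adjoint A f + adjoint B g) = 0 ∧ B (adjoint A f + adjoint B g) = 0 := by
  set x := adjoint A f + adjoint B g
  refine ⟨fun hx => by simp [hx], fun ⟨hA, hB⟩ => (inner_self_eq_zero (𝕜 := 𝕜)).mp ?_⟩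
  calc inner 𝕜 x x = inner 𝕜 f (A x) + inner 𝕜 g (B x) := by
        rw [inner_add_left, adjoint_inner_left, adjoint_inner_left]
    _ = 0 := by rw [hA, hB, inner_zero_right, inner_zero_right, add_zero]

theorem adjoint_add_adjoint_eq_zero_iff_of_comp_adjoint_eq_one {A B : F →L[𝕜] E}
    (hA : A ∘L adjoint A = 1) (hB : B ∘L adjoint B = 1) (f g : E) :
    adjoint A f + adjoint B g = 0 ↔
      f + (A ∘L adjoint B) g = 0 ∧ adjoint (A ∘L adjoint B) f + g = 0 := by
  have hA' : ∀ y : E, A (adjoint A y) = y := fun y => congr($hA y)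
  have hB' : ∀ y : E, B (adjoint B y) = y := fun y => congr($hB y)
  rw [adjoint_add_adjoint_eq_zero_iff, map_add, map_add, hA', hB', adjoint_comp,
    adjoint_adjoint, comp_apply, comp_apply]

theorem comp_unitary_comp_adjoint_eq_one {A : F →L[𝕜] E} (hA : A ∘L adjoint A = 1)
    {U : F →L[𝕜] F} (hU : U ∈ unitary (F →L[𝕜] F)) : (A ∘L U) ∘L adjoint (A ∘L U) = 1 := by
  rw [adjoint_comp, comp_assoc, ← comp_assoc U, ← star_eq_adjoint, ← mul_def,
    Unitary.mul_star_self_of_mem hU, one_def, id_comp, hA]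

end Adjoint

theorem stmt6 {K₁ K₂ : Type*}
    [NormedAddCommGroup K₁] [InnerProductSpace ℂ K₁] [FiniteDimensional ℂ K₁]
    [NormedAddCommGroup K₂] [InnerProductSpace ℂ K₂] [FiniteDimensional ℂ K₂]
    (S : K₂ →L[ℂ] K₂) (hS : IsSelfAdjoint S) (hSu : S ∈ unitary (K₂ →L[ℂ] K₂))
    (dA : K₂ →L[ℂ] K₁) (h : dA ∘L adjoint dA = 1)
    (dB : K₂ →L[ℂ] K₁) (hdB : dB = dA ∘L S)
    (T : K₁ →L[ℂ] K₁) (hT : T = dA ∘L adjoint dB)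
    (L : K₁ × K₁ →L[ℂ] K₂) (hL : ∀ f g : K₁, L (f, g) = adjoint dA f + adjoint dB g)
    (Ttil : K₁ × K₁ →L[ℂ] K₁ × K₁)
    (hTtil : ∀ f g : K₁, Ttil (f, g) = (-g, f + (2:ℂ) • T g)) :
    LinearMap.ker (L : K₁ × K₁ →ₗ[ℂ] K₂) =
      LinearMap.ker (((1 - Ttil ∘L Ttil : K₁ × K₁ →L[ℂ] K₁ × K₁)) : K₁ × K₁ →ₗ[ℂ] K₁ × K₁) := by
  have hB : dB ∘L adjoint dB = 1 := hdB ▸ comp_unitary_comp_adjoint_eq_one h hSu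
  have hT_sa : IsSelfAdjoint T := by
    rw [hT, hdB, adjoint_comp, hS.adjoint_eq, ← comp_assoc]
    exact hS.conj_adjoint dA
  have hTtil' : ∀ x, Ttil x = companion (T : K₁ →ₗ[ℂ] K₁) x := fun ⟨f, g⟩ => by
    simp [hTtil]
  ext ⟨f, g⟩
  rw [LinearMap.mem_ker, LinearMap.mem_ker, coe_coe, hL,
    adjoint_add_adjoint_eq_zero_iff_of_comp_adjoint_eq_one h hB, ← hT, hT_sa.adjoint_eq,
    coe_coe, sub_apply, one_apply_eq_self, sub_eq_zero, eq_comm (a := (f, g)),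
    comp_apply, hTtil', hTtil', companion_companion_eq_self_iff, coe_coe]
end

section
/- If λ is an eigenvalue of U restricted to 𝓛 = range(L), then λ is an eigenvalue of T̃ (in the generalized sense: some generalized eigenvector exists). -/
open ContinuousLinearMap

/-!
`L` intertwines `T̃` with `U`, since `U d_A* = d_B*` and `U d_B* = 2 d_B* T - d_A*`; hence
`L ∘ (λ - T̃) = (λ - U) ∘ L`. The kernel of `L` is then `(λ - T̃)`-invariant, so if `λ - T̃` were
injective it would map `ker L` onto itself by finite-dimensionality. For `L ψ = φ` an eigenvector of
`U`, the vector `(λ - T̃) ψ` lies in `ker L`, which would force `ψ ∈ ker L`, i.e. `φ = 0`. So `λ` is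
in fact an eigenvalue of `T̃`.
-/

section Intertwining

variable {K V W : Type*} [DivisionRing K] [AddCommGroup V] [Module K V] [AddCommGroup W]
  [Module K W]

theorem Submodule.map_eq_self_of_injective {A : V →ₗ[K] V} (hA : Function.Injective A)
    {p : Submodule K V} [FiniteDimensional K p] (hp : p.map A ≤ p) : p.map A = p :=
  Submodule.eq_of_le_of_finrank_eq hp (p.equivMapOfInjective A hA).finrank_eq.symm

theorem LinearMap.ker_ne_bot_of_comp_eq_comp [FiniteDimensional K V] {A : V →ₗ[K] V}
    {B : W →ₗ[K] W} {L : V →ₗ[K] W} (hAB : L ∘ₗ A = B ∘ₗ L) {φ : W} (hφ : φ ∈ L.range)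
    (hφ0 : φ ≠ 0) (hBφ : B φ = 0) : LinearMap.ker A ≠ ⊥ := by
  rw [Ne, LinearMap.ker_eq_bot]
  intro hA
  obtain ⟨ψ, rfl⟩ := hφ
  have hL_comm (x : V) : L (A x) = B (L x) := LinearMap.congr_fun hAB x
  have hinv : (LinearMap.ker L).map A ≤ LinearMap.ker L := by
    rintro _ ⟨x, hx, rfl⟩
    simp_all [LinearMap.mem_ker]
  have hAψ : A ψ ∈ (LinearMap.ker L).map A := by
    rw [Submodule.map_eq_self_of_injective hA hinv, LinearMap.mem_ker, hL_comm, hBφ]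
  obtain ⟨ψ', hψ', hψψ'⟩ := hAψ
  exact hφ0 (hA hψψ' ▸ hψ')

end Intertwining

section Setting

variable {K₁ K₂ : Type*} [NormedAddCommGroup K₁] [InnerProductSpace ℂ K₁] [CompleteSpace K₁]
  [NormedAddCommGroup K₂] [InnerProductSpace ℂ K₂] [CompleteSpace K₂]
  {S : K₂ →L[ℂ] K₂} {dA dB : K₂ →L[ℂ] K₁} {T : K₁ →L[ℂ] K₁} {U : K₂ →L[ℂ] K₂}

theorem adjoint_dB_eq (hS : IsSelfAdjoint S) (hdB : dB = dA ∘L S) :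
    adjoint dB = S ∘L adjoint dA := by
  rw [hdB, adjoint_comp, hS.adjoint_eq]

theorem U_comp_adjoint_dA (hS : IsSelfAdjoint S) (h : dA ∘L adjoint dA = 1)
    (hdB : dB = dA ∘L S) (hU : U = S ∘L ((2:ℂ) • (adjoint dA ∘L dA) - 1)) :
    U ∘L adjoint dA = adjoint dB := by
  ext f
  have hf : dA (adjoint dA f) = f := congr($h f)
  simp only [hU, adjoint_dB_eq hS hdB, comp_apply, sub_apply, smul_apply, one_apply_eq_self, hf]
  congr 1
  module

theorem U_comp_adjoint_dB (hS : IsSelfAdjoint S) (hS2 : S * S = 1) (hdB : dB = dA ∘L S)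
    (hT : T = dA ∘L adjoint dB) (hU : U = S ∘L ((2:ℂ) • (adjoint dA ∘L dA) - 1)) :
    U ∘L adjoint dB = (2:ℂ) • (adjoint dB ∘L T) - adjoint dA := by
  ext g
  have hSg (x : K₂) : S (S x) = x := congr($hS2 x)
  simp only [hU, hT, adjoint_dB_eq hS hdB, comp_apply, sub_apply, smul_apply, one_apply_eq_self,
    map_sub, map_smul, hSg]

theorem L_Ttil_apply (hS : IsSelfAdjoint S) (hS2 : S * S = 1) (h : dA ∘L adjoint dA = 1)
    (hdB : dB = dA ∘L S) (hT : T = dA ∘L adjoint dB)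
    (hU : U = S ∘L ((2:ℂ) • (adjoint dA ∘L dA) - 1))
    {L : K₁ × K₁ →L[ℂ] K₂} (hL : ∀ f g : K₁, L (f, g) = adjoint dA f + adjoint dB g)
    {Ttil : K₁ × K₁ →L[ℂ] K₁ × K₁} (hTtil : ∀ f g : K₁, Ttil (f, g) = (-g, f + (2:ℂ) • T g))
    (ψ : K₁ × K₁) : L (Ttil ψ) = U (L ψ) := by
  obtain ⟨f, g⟩ := ψ
  have hUA := congr($(U_comp_adjoint_dA hS h hdB hU) f)
  have hUB := congr($(U_comp_adjoint_dB hS hS2 hdB hT hU) g)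
  simp only [comp_apply, sub_apply, smul_apply] at hUA hUB
  rw [hTtil, hL, hL, map_add U, hUA, hUB, map_neg, map_add, map_smul]
  abel

end Setting

theorem stmt7 {K₁ K₂ : Type*}
    [NormedAddCommGroup K₁] [InnerProductSpace ℂ K₁] [FiniteDimensional ℂ K₁]
    [NormedAddCommGroup K₂] [InnerProductSpace ℂ K₂] [FiniteDimensional ℂ K₂]
    (S : K₂ →L[ℂ] K₂) (hS : IsSelfAdjoint S) (hSu : S ∈ unitary (K₂ →L[ℂ] K₂))
    (dA : K₂ →L[ℂ] K₁) (h : dA ∘L adjoint dA = 1)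
    (dB : K₂ →L[ℂ] K₁) (hdB : dB = dA ∘L S)
    (T : K₁ →L[ℂ] K₁) (hT : T = dA ∘L adjoint dB)
    (U : K₂ →L[ℂ] K₂) (hU : U = S ∘L ((2:ℂ) • (adjoint dA ∘L dA) - 1))
    (L : K₁ × K₁ →L[ℂ] K₂) (hL : ∀ f g : K₁, L (f, g) = adjoint dA f + adjoint dB g)
    (Ttil : K₁ × K₁ →L[ℂ] K₁ × K₁)
    (hTtil : ∀ f g : K₁, Ttil (f, g) = (-g, f + (2:ℂ) • T g))
    (lam : ℂ) (hlam : ∃ φ : K₂, φ ∈ Set.range L ∧ φ ≠ 0 ∧ U φ = lam • φ) :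
    ∃ (n : ℕ) (ψ : K₁ × K₁), ψ ≠ 0 ∧ ((lam • (1 : K₁ × K₁ →L[ℂ] K₁ × K₁) - Ttil) ^ n) ψ = 0 := by
  obtain ⟨φ, hφL, hφ0, hUφ⟩ := hlam
  have hS2 : S * S = 1 := by
    simpa only [hS.star_eq] using Unitary.star_mul_self_of_mem hSu
  have hint : (L : K₁ × K₁ →ₗ[ℂ] K₂) ∘ₗ (lam • 1 - Ttil : K₁ × K₁ →L[ℂ] K₁ × K₁)
      = (lam • 1 - U : K₂ →L[ℂ] K₂) ∘ₗ (L : K₁ × K₁ →ₗ[ℂ] K₂) := by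
    refine LinearMap.ext fun ψ => ?_
    simp [L_Ttil_apply hS hS2 h hdB hT hU hL hTtil]
  obtain ⟨ψ, hψ, hψ0⟩ := Submodule.exists_mem_ne_zero_of_ne_bot <|
    LinearMap.ker_ne_bot_of_comp_eq_comp hint hφL hφ0 (by simp [hUφ])
  exact ⟨1, ψ, hψ0, by simpa using hψ⟩
end

section
/- Away from ±1, the spectra of T̃ and of U restricted to 𝓛 coincide: Spec(T̃) \ {±1} = Spec(U|_𝓛) \ {±1}. -/
open ContinuousLinearMap

/-- If a power of `A` kills `ψ ≠ 0`, some `(A^m) ψ` is a nonzero element of `ker A`. -/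
lemma stmt8_aux_find {E : Type*} [NormedAddCommGroup E] [NormedSpace ℂ E]
    (A : E →L[ℂ] E) (n : ℕ) (ψ : E) (h0 : ψ ≠ 0) (hn : (A ^ n) ψ = 0) :
    ∃ m : ℕ, (A ^ m) ψ ≠ 0 ∧ A ((A ^ m) ψ) = 0 := by
  induction n with
  | zero => simp only [pow_zero, ContinuousLinearMap.one_apply] at hn; exact absurd hn h0
  | succ k ih =>
    by_cases hk : (A ^ k) ψ = 0
    · exact ih hk
    · refine ⟨k, hk, ?_⟩
      rw [← ContinuousLinearMap.mul_apply, ← pow_succ']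
      exact hn

theorem stmt8 {K₁ K₂ : Type*}
    [NormedAddCommGroup K₁] [InnerProductSpace ℂ K₁] [FiniteDimensional ℂ K₁]
    [NormedAddCommGroup K₂] [InnerProductSpace ℂ K₂] [FiniteDimensional ℂ K₂]
    (S : K₂ →L[ℂ] K₂) (hS : IsSelfAdjoint S) (hSu : S ∈ unitary (K₂ →L[ℂ] K₂))
    (dA : K₂ →L[ℂ] K₁) (h : dA ∘L adjoint dA = 1)
    (dB : K₂ →L[ℂ] K₁) (hdB : dB = dA ∘L S)
    (T : K₁ →L[ℂ] K₁) (hT : T = dA ∘L adjoint dB)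
    (U : K₂ →L[ℂ] K₂) (hU : U = S ∘L ((2:ℂ) • (adjoint dA ∘L dA) - 1))
    (L : K₁ × K₁ →L[ℂ] K₂) (hL : ∀ f g : K₁, L (f, g) = adjoint dA f + adjoint dB g)
    (Ttil : K₁ × K₁ →L[ℂ] K₁ × K₁)
    (hTtil : ∀ f g : K₁, Ttil (f, g) = (-g, f + (2:ℂ) • T g)) :
    {lam : ℂ | ∃ (n : ℕ) (ψ : K₁ × K₁), ψ ≠ 0 ∧
        ((lam • (1 : K₁ × K₁ →L[ℂ] K₁ × K₁) - Ttil) ^ n) ψ = 0} \ {1, -1}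
      = {lam : ℂ | ∃ (n : ℕ) (φ : K₂), φ ∈ Set.range L ∧ φ ≠ 0 ∧
        ((lam • (1 : K₂ →L[ℂ] K₂) - U) ^ n) φ = 0} \ {1, -1} := by
  -- basic pointwise facts
  have hA : ∀ x : K₁, dA (adjoint dA x) = x := by
    intro x
    have := ContinuousLinearMap.ext_iff.mp h x
    simpa using this
  have hS2 : ∀ x : K₂, S (S x) = x := by
    intro x
    have h1 : S * S = 1 := by
      have := hSu.1
      rwa [(IsSelfAdjoint.star_eq hS)] at this
    have := ContinuousLinearMap.ext_iff.mp h1 x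
    simpa [ContinuousLinearMap.mul_apply] using this
  have hadjB : ∀ x : K₁, adjoint dB x = S (adjoint dA x) := by
    intro x
    rw [hdB, adjoint_comp, (IsSelfAdjoint.adjoint_eq hS)]
    rfl
  have hBx : ∀ x : K₂, dB x = dA (S x) := by
    intro x; rw [hdB]; rfl
  have hTx : ∀ x : K₁, dA (S (adjoint dA x)) = T x := by
    intro x
    rw [hT]
    simp [ContinuousLinearMap.comp_apply, hadjB]
  have hUx : ∀ x : K₂, U x = S ((2:ℂ) • (adjoint dA (dA x)) - x) := by
    intro x
    rw [hU]
    simp [ContinuousLinearMap.comp_apply, ContinuousLinearMap.sub_apply,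
      ContinuousLinearMap.smul_apply, ContinuousLinearMap.one_apply]
  -- the reverse intertwiner M φ = (dB φ, -dA φ)
  set M : K₂ →L[ℂ] K₁ × K₁ := dB.prod (-dA) with hM
  have hMx : ∀ x : K₂, M x = (dB x, -dA x) := by
    intro x; simp [hM, ContinuousLinearMap.prod_apply]
  -- intertwining I1 : U ∘ L = L ∘ Ttil
  have I1 : ∀ p : K₁ × K₁, U (L p) = L (Ttil p) := by
    rintro ⟨f, g⟩
    rw [hTtil, hL, hL, hUx]
    simp only [map_add, map_smul, map_sub, map_neg, hA, hadjB, hS2, hTx]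
    module
  -- intertwining I2 : M ∘ U = Ttil ∘ M
  have I2 : ∀ x : K₂, M (U x) = Ttil (M x) := by
    intro x
    rw [hMx, hMx, hTtil, hUx, Prod.mk.injEq]
    constructor
    · rw [hBx]
      simp only [map_sub, map_smul, hS2, hA]
      module
    · simp only [map_sub, map_smul, map_neg, hTx, ← hBx]
      module
  -- the key algebraic identity I3 : 2 • Ttil (M (L p)) = p - Ttil (Ttil p)
  have I3 : ∀ p : K₁ × K₁, (2:ℂ) • Ttil (M (L p)) = p - Ttil (Ttil p) := by
    rintro ⟨f, g⟩
    have e1 : dB (L (f, g)) = T f + g := by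
      rw [hL, hBx]
      simp only [map_add, hadjB, hS2, hTx, hA]
    have e2 : dA (L (f, g)) = f + T g := by
      rw [hL]
      simp only [map_add, hadjB, hA, hTx]
    rw [hMx, e1, e2, hTtil, hTtil f g, hTtil, Prod.smul_mk, Prod.mk_sub_mk, Prod.mk.injEq]
    constructor
    · module
    · simp only [map_neg, map_add, map_smul]
      module
  -- I4 : the identity on the range of L
  have I4 : ∀ p : K₁ × K₁, (2:ℂ) • U (L (M (L p))) = L p - U (U (L p)) := by
    intro p
    have := congrArg L (I3 p)
    rw [map_smul, map_sub, ← I1, ← I1, ← I1] at this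
    exact this
  ext lam
  simp only [Set.mem_diff, Set.mem_setOf_eq, Set.mem_insert_iff, Set.mem_singleton_iff]
  set A : K₁ × K₁ →L[ℂ] K₁ × K₁ := lam • (1 : K₁ × K₁ →L[ℂ] K₁ × K₁) - Ttil with hAdef
  set B : K₂ →L[ℂ] K₂ := lam • (1 : K₂ →L[ℂ] K₂) - U with hBdef
  have stepL : ∀ p : K₁ × K₁, L (A p) = B (L p) := by
    intro p
    rw [hAdef, hBdef]
    simp only [ContinuousLinearMap.sub_apply, ContinuousLinearMap.smul_apply,
      ContinuousLinearMap.one_apply, map_sub, map_smul, I1]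
  have stepM : ∀ x : K₂, M (B x) = A (M x) := by
    intro x
    rw [hAdef, hBdef]
    simp only [ContinuousLinearMap.sub_apply, ContinuousLinearMap.smul_apply,
      ContinuousLinearMap.one_apply, map_sub, map_smul, I2]
  have keyL : ∀ (k : ℕ) (p : K₁ × K₁), L ((A ^ k) p) = (B ^ k) (L p) := by
    intro k
    induction k with
    | zero => intro p; simp
    | succ m ih =>
      intro p
      rw [pow_succ, ContinuousLinearMap.mul_apply, ih, stepL, ← ContinuousLinearMap.mul_apply,
        ← pow_succ]
  have keyM : ∀ (k : ℕ) (x : K₂), M ((B ^ k) x) = (A ^ k) (M x) := by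
    intro k
    induction k with
    | zero => intro x; simp
    | succ m ih =>
      intro x
      rw [pow_succ, ContinuousLinearMap.mul_apply, ih, stepM, ← ContinuousLinearMap.mul_apply,
        ← pow_succ]
  constructor
  · rintro ⟨⟨n, ψ, hψ0, hψn⟩, hlam⟩
    refine ⟨⟨n, L ψ, ⟨ψ, rfl⟩, ?_, ?_⟩, hlam⟩
    · -- L ψ ≠ 0
      intro hLψ
      obtain ⟨m, hm0, hm1⟩ := stmt8_aux_find A n ψ hψ0 hψn
      set ψ' : K₁ × K₁ := (A ^ m) ψ with hψ'
      have hTψ' : Ttil ψ' = lam • ψ' := by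
        have : lam • ψ' - Ttil ψ' = 0 := by
          have := hm1
          rwa [hAdef, ContinuousLinearMap.sub_apply, ContinuousLinearMap.smul_apply,
            ContinuousLinearMap.one_apply] at this
        exact (sub_eq_zero.mp this).symm
      have hLψ' : L ψ' = 0 := by
        rw [hψ', keyL, hLψ, map_zero]
      have h3 := I3 ψ'
      rw [hLψ', map_zero, map_zero, smul_zero, hTψ', map_smul, hTψ', smul_smul] at h3
      have h4 : (1 - lam * lam) • ψ' = 0 := by
        rw [sub_smul, one_smul]
        exact h3.symm
      rcases smul_eq_zero.mp h4 with h5 | h5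
      · have : lam * lam = 1 := by
          exact (sub_eq_zero.mp h5).symm
        rcases mul_self_eq_one_iff.mp this with h6 | h6
        · exact hlam (Or.inl h6)
        · exact hlam (Or.inr h6)
      · exact hm0 h5
    · rw [← keyL, hψn, map_zero]
  · rintro ⟨⟨n, φ, ⟨χ, hχ⟩, hφ0, hφn⟩, hlam⟩
    refine ⟨⟨n, M φ, ?_, ?_⟩, hlam⟩
    · -- M φ ≠ 0
      intro hMφ
      obtain ⟨m, hm0, hm1⟩ := stmt8_aux_find B n φ hφ0 hφn
      set φ' : K₂ := (B ^ m) φ with hφ'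
      have hUφ' : U φ' = lam • φ' := by
        have : lam • φ' - U φ' = 0 := by
          have := hm1
          rwa [hBdef, ContinuousLinearMap.sub_apply, ContinuousLinearMap.smul_apply,
            ContinuousLinearMap.one_apply] at this
        exact (sub_eq_zero.mp this).symm
      have hMφ' : M φ' = 0 := by
        rw [hφ', keyM, hMφ, map_zero]
      have hφ'L : φ' = L ((A ^ m) χ) := by
        rw [keyL, hχ, hφ']
      have h3 := I4 ((A ^ m) χ)
      rw [← hφ'L, hMφ', map_zero, map_zero, smul_zero, hUφ', map_smul, hUφ', smul_smul] at h3
      have h4 : (1 - lam * lam) • φ' = 0 := by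
        rw [sub_smul, one_smul]
        exact h3.symm
      rcases smul_eq_zero.mp h4 with h5 | h5
      · have : lam * lam = 1 := by
          exact (sub_eq_zero.mp h5).symm
        rcases mul_self_eq_one_iff.mp this with h6 | h6
        · exact hlam (Or.inl h6)
        · exact hlam (Or.inr h6)
      · exact hm0 h5
    · rw [← keyM, hφn, map_zero]
end

section
/- For λ ≠ 0, the kernel of λI - T̃ equals the set of pairs (g, -λg) with g ∈ ker(((λ + λ⁻¹)/2) I - T); that is, ker(λI - T̃) = (1, -λ) ⊗ ker(((λ+λ⁻¹)/2) I - T). -/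
/-!
Write `ψ = (f, g)`. The first component of `λ ψ = T̃ ψ` reads `g = -λ f`; substituting this into
the second gives `2λ T f = (λ² + 1) f`, i.e. `T f = ((λ + λ⁻¹)/2) f`.
-/

section

variable {𝕜 E : Type*} [Field 𝕜] [AddCommGroup E] [Module 𝕜 E]

theorem smul_eq_half_add_inv_smul_iff (h2 : (2 : 𝕜) ≠ 0) {lam : 𝕜} (hlam : lam ≠ 0) (x y : E) :
    y = ((lam + lam⁻¹) / 2) • x ↔ (2 * lam) • y = (lam ^ 2 + 1) • x := by
  have h2lam : (2 * lam : 𝕜) ≠ 0 := mul_ne_zero h2 hlam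
  have hcoeff : (lam + lam⁻¹) / 2 = (2 * lam)⁻¹ * (lam ^ 2 + 1) := by field_simp
  rw [hcoeff, mul_smul, eq_inv_smul_iff₀ h2lam]

theorem smul_pair_eq_companion_iff {F : Type*} [FunLike F E E] [LinearMapClass F 𝕜 E E]
    (h2 : (2 : 𝕜) ≠ 0) (T : F) {lam : 𝕜} (hlam : lam ≠ 0) (f g : E) :
    lam • (f, g) = (-g, f + (2 : 𝕜) • T g) ↔
      T f = ((lam + lam⁻¹) / 2) • f ∧ g = -(lam • f) := by
  rw [Prod.smul_mk, Prod.mk.injEq, eq_comm (a := lam • f), neg_eq_iff_eq_neg, and_comm]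
  refine and_congr_left fun hg => ?_
  subst hg
  rw [smul_eq_half_add_inv_smul_iff h2 hlam, map_neg, map_smul]
  constructor <;> intro h <;> linear_combination (norm := module) h

end

theorem stmt9_general {K₁ : Type*}
    [NormedAddCommGroup K₁] [InnerProductSpace ℂ K₁]
    (T : K₁ →L[ℂ] K₁)
    (Ttil : K₁ × K₁ →L[ℂ] K₁ × K₁)
    (hTtil : ∀ f g : K₁, Ttil (f, g) = (-g, f + (2:ℂ) • T g))
    (lam : ℂ) (hlam : lam ≠ 0) :
    {ψ : K₁ × K₁ | lam • ψ - Ttil ψ = 0}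
      = {ψ : K₁ × K₁ | ∃ g : K₁, T g = ((lam + lam⁻¹) / 2) • g ∧ ψ = (g, -(lam • g))} := by
  ext ⟨f, g⟩
  simp only [Set.mem_ofPred_eq, sub_eq_zero, hTtil,
    smul_pair_eq_companion_iff two_ne_zero T hlam, Prod.mk.injEq]
  constructor
  · rintro ⟨hT, rfl⟩
    exact ⟨f, hT, rfl, rfl⟩
  · rintro ⟨f, hT, rfl, rfl⟩
    exact ⟨hT, rfl⟩

theorem stmt9 {K₁ : Type*}
    [NormedAddCommGroup K₁] [InnerProductSpace ℂ K₁] [FiniteDimensional ℂ K₁]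
    (T : K₁ →L[ℂ] K₁)
    (Ttil : K₁ × K₁ →L[ℂ] K₁ × K₁)
    (hTtil : ∀ f g : K₁, Ttil (f, g) = (-g, f + (2:ℂ) • T g))
    (lam : ℂ) (hlam : lam ≠ 0) :
    {ψ : K₁ × K₁ | lam • ψ - Ttil ψ = 0}
      = {ψ : K₁ × K₁ | ∃ g : K₁, T g = ((lam + lam⁻¹) / 2) • g ∧ ψ = (g, -(lam • g))} :=
  stmt9_general T Ttil hTtil lam hlam
end

section
/- For every n ≥ 1, (I - T̃)^{2n} = 2ⁿ (-T̃)ⁿ ∘ diag((I-T)ⁿ, (I-T)ⁿ) as operators on K₁ ⊕ K₁. -/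
/-!
The operator `T̃ = [[0, -1], [1, 2T]]` is the companion matrix of `X² - 2TX + 1` over the
commutative algebra generated by `T`, so it commutes with `S = diag(T, T)` and satisfies
`T̃² = 2 T̃ S - 1`. Hence `(1 - T̃)² = 1 - 2T̃ + T̃² = 2 (-T̃)(1 - S)`, and since the two factors
commute, raising to the `n`-th power gives the claim.
-/

theorem one_sub_pow_two_mul_eq_of_sq_eq {A : Type*} [Ring A] {t s : A} (hts : Commute t s)
    (h : t ^ 2 = 2 * t * s - 1) (n : ℕ) :
    (1 - t) ^ (2 * n) = 2 ^ n * ((-t) ^ n * (1 - s) ^ n) := by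
  have hsq : (1 - t) ^ 2 = 2 * ((-t) * (1 - s)) :=
    calc (1 - t) ^ 2 = 1 - 2 * t + t ^ 2 := by noncomm_ring
      _ = 2 * ((-t) * (1 - s)) := by rw [h]; noncomm_ring
  calc (1 - t) ^ (2 * n) = (2 * ((-t) * (1 - s))) ^ n := by rw [pow_mul, hsq]
    _ = 2 ^ n * ((-t) * (1 - s)) ^ n := (Commute.ofNat_left 2 _).mul_pow n
    _ = 2 ^ n * ((-t) ^ n * (1 - s) ^ n) := by
      rw [((Commute.one_right t).sub_right hts).neg_left.mul_pow]

namespace ContinuousLinearMap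

section prodMap

variable {R M N : Type*} [Semiring R] [TopologicalSpace M] [AddCommMonoid M] [Module R M]
  [TopologicalSpace N] [AddCommMonoid N] [Module R N]

theorem prodMap_mul (f₁ f₂ : M →L[R] M) (g₁ g₂ : N →L[R] N) :
    f₁.prodMap g₁ * f₂.prodMap g₂ = (f₁ * f₂).prodMap (g₁ * g₂) :=
  rfl

theorem prodMap_pow (f : M →L[R] M) (g : N →L[R] N) (n : ℕ) :
    f.prodMap g ^ n = (f ^ n).prodMap (g ^ n) := by
  induction n with
  | zero => rfl
  | succ n ih => rw [pow_succ, ih, prodMap_mul, pow_succ, pow_succ]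

end prodMap

variable {R M : Type*} [Ring R] [TopologicalSpace M] [AddCommGroup M] [Module R M]

theorem commute_prodMap_self_of_apply_eq {T : M →L[R] M} {A : M × M →L[R] M × M}
    (hA : ∀ f g : M, A (f, g) = (-g, f + (2 : R) • T g)) : Commute A (T.prodMap T) := by
  refine ContinuousLinearMap.ext fun ⟨f, g⟩ => ?_
  simp [hA]

variable [IsTopologicalAddGroup M]

theorem one_sub_prodMap_self (T : M →L[R] M) : 1 - T.prodMap T = (1 - T).prodMap (1 - T) :=
  rfl

theorem sq_eq_two_mul_mul_prodMap_sub_one_of_apply_eq {T : M →L[R] M} {A : M × M →L[R] M × M}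
    (hA : ∀ f g : M, A (f, g) = (-g, f + (2 : R) • T g)) : A ^ 2 = 2 * A * T.prodMap T - 1 := by
  refine ContinuousLinearMap.ext fun ⟨f, g⟩ => ?_
  simp [pow_two, hA, ofNat_smul_eq_nsmul]
  constructor <;> abel

end ContinuousLinearMap

open ContinuousLinearMap

theorem stmt10_general {K₁ : Type*}
    [NormedAddCommGroup K₁] [InnerProductSpace ℂ K₁]
    (T : K₁ →L[ℂ] K₁)
    (Ttil : K₁ × K₁ →L[ℂ] K₁ × K₁)
    (hTtil : ∀ f g : K₁, Ttil (f, g) = (-g, f + (2:ℂ) • T g))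
    (n : ℕ) :
    (1 - Ttil) ^ (2 * n)
      = (2:ℂ) ^ n • (((-Ttil) ^ n) ∘L ((1 - T) ^ n).prodMap ((1 - T) ^ n)) := by
  rw [← prodMap_pow, ← one_sub_prodMap_self, Algebra.smul_def, map_pow, map_ofNat]
  exact one_sub_pow_two_mul_eq_of_sq_eq (commute_prodMap_self_of_apply_eq hTtil)
    (sq_eq_two_mul_mul_prodMap_sub_one_of_apply_eq hTtil) n

theorem stmt10 {K₁ : Type*}
    [NormedAddCommGroup K₁] [InnerProductSpace ℂ K₁] [FiniteDimensional ℂ K₁]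
    (T : K₁ →L[ℂ] K₁)
    (Ttil : K₁ × K₁ →L[ℂ] K₁ × K₁)
    (hTtil : ∀ f g : K₁, Ttil (f, g) = (-g, f + (2:ℂ) • T g))
    (n : ℕ) (hn : 1 ≤ n) :
    (1 - Ttil) ^ (2 * n)
      = (2:ℂ) ^ n • (((-Ttil) ^ n) ∘L ((1 - T) ^ n).prodMap ((1 - T) ^ n)) :=
  stmt10_general T Ttil hTtil n
end

section
/- For every n ≥ 1, (I + T̃)^{2n} = 2ⁿ T̃ⁿ ∘ diag((I+T)ⁿ, (I+T)ⁿ) as operators on K₁ ⊕ K₁. -/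
open ContinuousLinearMap

theorem stmt11 {K₁ : Type*}
    [NormedAddCommGroup K₁] [InnerProductSpace ℂ K₁] [FiniteDimensional ℂ K₁]
    (T : K₁ →L[ℂ] K₁)
    (Ttil : K₁ × K₁ →L[ℂ] K₁ × K₁)
    (hTtil : ∀ f g : K₁, Ttil (f, g) = (-g, f + (2:ℂ) • T g))
    (n : ℕ) (hn : 1 ≤ n) :
    (1 + Ttil) ^ (2 * n)
      = (2:ℂ) ^ n • ((Ttil ^ n) ∘L ((1 + T) ^ n).prodMap ((1 + T) ^ n)) := by
  set D : K₁ × K₁ →L[ℂ] K₁ × K₁ := (1 + T).prodMap (1 + T) with hD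
  have hsq : (1 + Ttil) ^ 2 = (2:ℂ) • (Ttil * D) := by
    apply ContinuousLinearMap.ext
    rintro ⟨f, g⟩
    apply Prod.ext <;>
      simp [pow_two, mul_apply, hTtil, hD, map_add, map_smul, smul_add] <;>
      module
  have hcomm : Commute Ttil D := by
    apply ContinuousLinearMap.ext
    rintro ⟨f, g⟩
    apply Prod.ext <;>
      simp [mul_apply, hTtil, hD, map_add, map_smul] <;> module
  have hDpow : ∀ m : ℕ, D ^ m = ((1 + T) ^ m).prodMap ((1 + T) ^ m) := by
    intro m
    induction m with
    | zero =>
      apply ContinuousLinearMap.ext; rintro ⟨f, g⟩; simp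
    | succ k ih =>
      apply ContinuousLinearMap.ext; rintro ⟨f, g⟩
      simp [pow_succ, mul_apply, ih, hD, Prod.ext_iff]
  have : (1 + Ttil) ^ (2 * n) = ((1 + Ttil) ^ 2) ^ n := by rw [← pow_mul]
  rw [this, hsq, smul_pow, hcomm.mul_pow, hDpow]
  rfl
end

section
/- If T is self-adjoint, then for every n ≥ 2, ker(I + T̃)ⁿ = {(f,g) : f, g ∈ ker(I + T)}, while ker(I + T̃) = {(f, f) : f ∈ ker(I + T)}. -/
/-!
Put `S = 1 + T̃`, so that `S (f, g) = (f - g, f + g + 2 T g)`. If both components of `S (f, g)`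
lie in `ker (1 + T)`, then the difference of the two gives `(1 + T)² g = 0`, hence `(1 + T) g = 0`
because `1 + T` is symmetric, and then `(1 + T) f = 0`. By induction every `ker Sⁿ` lies in
`ker (1 + T) × ker (1 + T)`, and this space is annihilated by `S²`.
-/

open ContinuousLinearMap

section

variable {𝕜 E : Type*} [RCLike 𝕜] [NormedAddCommGroup E] [InnerProductSpace 𝕜 E]

theorem LinearMap.IsSymmetric.apply_eq_zero_of_apply_apply_eq_zero {A : E →ₗ[𝕜] E}
    (hA : A.IsSymmetric) {x : E} (h : A (A x) = 0) : A x = 0 := by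
  rw [← inner_self_eq_zero (𝕜 := 𝕜), hA, h, inner_zero_right]

theorem LinearMap.IsSymmetric.eq_neg_of_apply_add_eq_neg {T : E →ₗ[𝕜] E} (hT : T.IsSymmetric)
    {x : E} (h : T (x + T x) = -(x + T x)) : T x = -x := by
  have hA := (LinearMap.IsSymmetric.one.add hT).apply_eq_zero_of_apply_apply_eq_zero (x := x)
  simp only [LinearMap.add_apply, Module.End.one_apply] at hA
  rw [← add_eq_zero_iff_eq_neg'] at h ⊢
  exact hA h

variable {T : E →L[𝕜] E} {Ttil : E × E →L[𝕜] E × E}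
  (hTtil : ∀ f g : E, Ttil (f, g) = (-g, f + (2:𝕜) • T g))
include hTtil

theorem one_add_apply_mk (f g : E) :
    (1 + Ttil) (f, g) = (f - g, f + g + (2:𝕜) • T g) := by
  rw [add_apply, one_apply_eq_self, hTtil, Prod.mk_add_mk, sub_eq_add_neg, add_left_comm g f,
    add_assoc]

theorem one_add_sq_apply_eq_zero_of_apply_eq {f g : E} (hf : T f = -f) (hg : T g = -g) :
    ((1 + Ttil) ^ (2 : ℕ)) (f, g) = 0 := by
  simp only [sq, mul_apply_eq_comp, one_add_apply_mk hTtil, map_add, map_smul, hf, hg,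
    map_neg, neg_neg, Prod.ext_iff, Prod.fst_zero, Prod.snd_zero]
  constructor <;> module

theorem eq_neg_of_one_add_apply_eq (hT : (T : E →ₗ[𝕜] E).IsSymmetric) {f g : E}
    (h₁ : T ((1 + Ttil) (f, g)).1 = -((1 + Ttil) (f, g)).1)
    (h₂ : T ((1 + Ttil) (f, g)).2 = -((1 + Ttil) (f, g)).2) :
    T f = -f ∧ T g = -g := by
  rw [one_add_apply_mk hTtil] at h₁ h₂
  simp only [map_add, map_sub, map_smul] at h₁ h₂
  have hg : T g = -g := by
    refine hT.eq_neg_of_apply_add_eq_neg ?_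
    rw [map_add]
    linear_combination (norm := module) (2⁻¹ : 𝕜) • (h₂ - h₁)
  exact ⟨by linear_combination (norm := module) h₁ + hg, hg⟩

theorem one_add_apply_eq_zero_iff {f g : E} :
    (1 + Ttil) (f, g) = 0 ↔ f = g ∧ T g = -g := by
  simp only [one_add_apply_mk hTtil, Prod.ext_iff, Prod.fst_zero, Prod.snd_zero]
  constructor
  · rintro ⟨h₁, h₂⟩
    obtain rfl := sub_eq_zero.mp h₁
    exact ⟨rfl, by linear_combination (norm := module) (2⁻¹ : 𝕜) • h₂⟩
  · rintro ⟨rfl, hg⟩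
    simp only [sub_self, hg, true_and]
    module

theorem eq_neg_of_one_add_pow_apply_eq_zero (hT : (T : E →ₗ[𝕜] E).IsSymmetric) (n : ℕ) {f g : E}
    (h : ((1 + Ttil) ^ n) (f, g) = 0) : T f = -f ∧ T g = -g := by
  induction n generalizing f g with
  | zero =>
    obtain ⟨rfl, rfl⟩ := Prod.ext_iff.mp h
    simp
  | succ n ih =>
    rw [pow_succ, mul_apply_eq_comp] at h
    exact eq_neg_of_one_add_apply_eq hTtil hT (ih h).1 (ih h).2

end

theorem stmt14 {K₁ : Type*}
    [NormedAddCommGroup K₁] [InnerProductSpace ℂ K₁] [FiniteDimensional ℂ K₁]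
    (T : K₁ →L[ℂ] K₁) (hT : IsSelfAdjoint T)
    (Ttil : K₁ × K₁ →L[ℂ] K₁ × K₁)
    (hTtil : ∀ f g : K₁, Ttil (f, g) = (-g, f + (2:ℂ) • T g)) :
    (∀ n : ℕ, 2 ≤ n →
      {ψ : K₁ × K₁ | ((1 + Ttil) ^ n) ψ = 0}
        = {ψ : K₁ × K₁ | T ψ.1 = -ψ.1 ∧ T ψ.2 = -ψ.2}) ∧
    {ψ : K₁ × K₁ | ψ + Ttil ψ = 0}
      = {ψ : K₁ × K₁ | ∃ f : K₁, T f = -f ∧ ψ = (f, f)} := by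
  refine ⟨fun n hn ↦ ?_, ?_⟩
  · ext ⟨f, g⟩
    refine ⟨eq_neg_of_one_add_pow_apply_eq_zero hTtil hT.isSymmetric n, fun ⟨hf, hg⟩ ↦ ?_⟩
    obtain ⟨m, rfl⟩ := Nat.exists_eq_add_of_le' hn
    change ((1 + Ttil) ^ (m + 2)) (f, g) = 0
    rw [pow_add, mul_apply_eq_comp, one_add_sq_apply_eq_zero_of_apply_eq hTtil hf hg, map_zero]
  · ext ⟨f, g⟩
    change (1 + Ttil) (f, g) = 0 ↔ _
    rw [one_add_apply_eq_zero_iff hTtil]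
    constructor
    · rintro ⟨rfl, hg⟩
      exact ⟨f, hg, rfl⟩
    · rintro ⟨f, hf, ⟨⟩⟩
      exact ⟨rfl, hf⟩
end

section
/- For ψ ∈ K₁ ⊕ K₁, the following are equivalent: (i) ULψ = Lψ ≠ 0; (ii) ψ ∈ ker((I - T̃)²(I + T̃)) \ ker L; (iii) ψ = ψ₁ + ψ₂ with ψ₁ ∈ ker(I - T̃)² \ ker(I - T̃), ψ₁ ≠ 0, and ψ₂ ∈ ker L. -/
/-!
`L` intertwines `T̃` with `U`, so `ULψ = Lψ` says exactly that `(1 - T̃)ψ ∈ ker L`. On `ker L`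
the map `T̃` is an involution, and every eigenvector of `T̃` for the eigenvalue `±1` lies in `ker L`:
for such a vector `(f, g)` the vectors `S d_A* g` and `±d_A* g` have the same norm and the same
image under the coisometry `d_A`, hence coincide. Splitting `ψ` along the coprime factors
`(1 - X)²` and `1 + X` of `(1 - X)²(1 + X)` then gives both equivalences.
-/

open ContinuousLinearMap

open Polynomial in
theorem Module.End.ker_one_sub_sq_sup_ker_one_add {𝕜 V : Type*} [Field 𝕜] [AddCommGroup V]
    [Module 𝕜 V] (h2 : (2 : 𝕜) ≠ 0) (t : Module.End 𝕜 V) :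
    LinearMap.ker ((1 - t) ^ 2) ⊔ LinearMap.ker (1 + t) =
      LinearMap.ker ((1 - t) ^ 2 * (1 + t)) := by
  have hunit : IsUnit ((1 : 𝕜) - -1) := by
    rw [sub_neg_eq_add, one_add_one_eq_two]; exact h2.isUnit
  have := sup_ker_aeval_eq_ker_aeval_mul_of_coprime t
    ((isCoprime_X_sub_C_of_isUnit_sub hunit).pow_left (m := 2))
  have hsq : (t - 1) ^ 2 = (1 - t) ^ 2 := by noncomm_ring
  simpa [hsq, add_comm t 1] using this

section

variable {𝕜 V W : Type*} [Field 𝕜] [AddCommGroup V] [Module 𝕜 V] [AddCommGroup W] [Module 𝕜 W]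
  {t : Module.End 𝕜 V} {l : V →ₗ[𝕜] W}

theorem Module.End.apply_one_sub_apply_of_one_sub_sq_apply_eq_zero {v : V}
    (hv : ((1 - t) ^ 2 : Module.End 𝕜 V) v = 0) : t ((1 - t) v) = (1 - t) v := by
  rw [sq, Module.End.mul_apply, LinearMap.sub_apply, Module.End.one_apply, sub_eq_zero] at hv
  exact hv.symm

theorem Module.End.exists_add_of_one_sub_sq_mul_one_add_apply_eq_zero (h2 : (2 : 𝕜) ≠ 0) {ψ : V}
    (hψ : ((1 - t) ^ 2 * (1 + t) : Module.End 𝕜 V) ψ = 0) :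
    ∃ ψ₁ ψ₂, ψ = ψ₁ + ψ₂ ∧ ((1 - t) ^ 2 : Module.End 𝕜 V) ψ₁ = 0 ∧ t ψ₂ = -ψ₂ := by
  rw [← LinearMap.mem_ker, ← ker_one_sub_sq_sup_ker_one_add h2, Submodule.mem_sup] at hψ
  obtain ⟨ψ₁, hψ₁, ψ₂, hψ₂, rfl⟩ := hψ
  refine ⟨ψ₁, ψ₂, rfl, hψ₁, ?_⟩
  rw [LinearMap.mem_ker, LinearMap.add_apply, Module.End.one_apply, add_eq_zero_iff_neg_eq] at hψ₂
  exact hψ₂.symm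

theorem map_one_sub_apply_eq_zero_iff (h2 : (2 : 𝕜) ≠ 0) (hinvol : ∀ v, l v = 0 → t (t v) = v)
    (hfix : ∀ v, t v = v → l v = 0) (hanti : ∀ v, t v = -v → l v = 0) (ψ : V) :
    l ((1 - t) ψ) = 0 ↔ ((1 - t) ^ 2 * (1 + t) : Module.End 𝕜 V) ψ = 0 := by
  constructor
  · intro h
    have hfactor : (1 - t) ^ 2 * (1 + t) = (1 - t * t) * (1 - t) := by noncomm_ring
    rw [hfactor, Module.End.mul_apply, LinearMap.sub_apply, Module.End.one_apply,
      Module.End.mul_apply, hinvol _ h, sub_self]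
  · intro h
    obtain ⟨ψ₁, ψ₂, rfl, hψ₁, hψ₂⟩ :=
      Module.End.exists_add_of_one_sub_sq_mul_one_add_apply_eq_zero h2 h
    have h₁ : l ((1 - t) ψ₁) = 0 :=
      hfix _ (Module.End.apply_one_sub_apply_of_one_sub_sq_apply_eq_zero hψ₁)
    have h₂ : (1 - t) ψ₂ = (2 : 𝕜) • ψ₂ := by
      rw [LinearMap.sub_apply, Module.End.one_apply, hψ₂]; module
    rw [map_add, map_add, h₁, h₂, map_smul, hanti _ hψ₂, smul_zero, add_zero]

theorem map_one_sub_apply_eq_zero_and_ne_zero_iff (h2 : (2 : 𝕜) ≠ 0)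
    (hmaps : ∀ v, l v = 0 → l (t v) = 0) (hinvol : ∀ v, l v = 0 → t (t v) = v)
    (hfix : ∀ v, t v = v → l v = 0) (hanti : ∀ v, t v = -v → l v = 0) (ψ : V) :
    l ((1 - t) ψ) = 0 ∧ l ψ ≠ 0 ↔ ∃ ψ₁ ψ₂, ψ = ψ₁ + ψ₂ ∧
      ((1 - t) ^ 2 : Module.End 𝕜 V) ψ₁ = 0 ∧ (1 - t) ψ₁ ≠ 0 ∧ ψ₁ ≠ 0 ∧ l ψ₂ = 0 := by
  constructor
  · rintro ⟨h, hψ⟩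
    rw [map_one_sub_apply_eq_zero_iff h2 hinvol hfix hanti] at h
    obtain ⟨ψ₁, ψ₂, rfl, hψ₁, hψ₂⟩ :=
      Module.End.exists_add_of_one_sub_sq_mul_one_add_apply_eq_zero h2 h
    have hl₂ : l ψ₂ = 0 := hanti _ hψ₂
    have hne : (1 - t) ψ₁ ≠ 0 := by
      intro h₁
      rw [LinearMap.sub_apply, Module.End.one_apply, sub_eq_zero] at h₁
      exact hψ (by rw [map_add, hfix _ h₁.symm, hl₂, add_zero])
    exact ⟨ψ₁, ψ₂, rfl, hψ₁, hne, fun h₀ => hne (by rw [h₀, map_zero]), hl₂⟩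
  · rintro ⟨ψ₁, ψ₂, rfl, hψ₁, hne, -, hl₂⟩
    have h₁ : l ((1 - t) ψ₁) = 0 :=
      hfix _ (Module.End.apply_one_sub_apply_of_one_sub_sq_apply_eq_zero hψ₁)
    have h₂ : l ((1 - t) ψ₂) = 0 := by
      rw [LinearMap.sub_apply, Module.End.one_apply, map_sub, hl₂, hmaps _ hl₂, sub_zero]
    refine ⟨by rw [map_add, map_add, h₁, h₂, add_zero], ?_⟩
    rw [map_add, hl₂, add_zero]
    intro hl₁
    -- on `ker l` the map `t` is an involution, so there `(1 - t) ^ 2 = 2 • (1 - t)`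
    have : ((1 - t) ^ 2 : Module.End 𝕜 V) ψ₁ = (2 : 𝕜) • (1 - t) ψ₁ := by
      simp only [sq, Module.End.mul_apply, LinearMap.sub_apply, Module.End.one_apply, map_sub,
        hinvol _ hl₁]
      module
    rw [this, smul_eq_zero_iff_right h2] at hψ₁
    exact hne hψ₁

end

section

variable {𝕜 E F : Type*} [RCLike 𝕜] [NormedAddCommGroup E] [InnerProductSpace 𝕜 E]
  [CompleteSpace E] [NormedAddCommGroup F] [InnerProductSpace 𝕜 F] [CompleteSpace F] {A : E →L[𝕜] F}

theorem ContinuousLinearMap.norm_adjoint_apply_of_comp_adjoint_eq_one (hA : A ∘L adjoint A = 1)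
    (y : F) : ‖adjoint A y‖ = ‖y‖ :=
  (norm_map_iff_adjoint_comp_self (adjoint A)).mpr (by rwa [adjoint_adjoint]) y

theorem ContinuousLinearMap.eq_adjoint_apply_of_apply_eq (hA : A ∘L adjoint A = 1) {x : E} {y : F}
    (hxy : A x = y) (hnorm : ‖x‖ ≤ ‖y‖) : x = adjoint A y := by
  have h : ‖x - adjoint A y‖ ^ 2 ≤ 0 := by
    rw [@norm_sub_sq 𝕜, adjoint_inner_right, hxy, inner_self_eq_norm_sq,
      norm_adjoint_apply_of_comp_adjoint_eq_one hA]
    nlinarith [norm_nonneg x]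
  rw [← sub_eq_zero, ← norm_eq_zero]
  exact pow_eq_zero_iff two_ne_zero |>.mp (le_antisymm h (sq_nonneg _))

end

section

variable {𝕜 K₁ K₂ : Type*} [RCLike 𝕜] [NormedAddCommGroup K₁] [InnerProductSpace 𝕜 K₁]
  [CompleteSpace K₁] [NormedAddCommGroup K₂] [InnerProductSpace 𝕜 K₂] [CompleteSpace K₂]
  {S : K₂ →L[𝕜] K₂} {dA : K₂ →L[𝕜] K₁} {L : K₁ × K₁ →L[𝕜] K₂} {Ttil : K₁ × K₁ →L[𝕜] K₁ × K₁}

theorem U_L_eq_L_Ttil (hdA : dA ∘L adjoint dA = 1) (hS : ∀ x, S (S x) = x)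
    {U : K₂ →L[𝕜] K₂} (hU : U = S ∘L ((2 : 𝕜) • (adjoint dA ∘L dA) - 1))
    (hL : ∀ f g, L (f, g) = adjoint dA f + S (adjoint dA g))
    (hTtil : ∀ f g, Ttil (f, g) = (-g, f + (2 : 𝕜) • dA (S (adjoint dA g)))) (p : K₁ × K₁) :
    U (L p) = L (Ttil p) := by
  have hdA' : ∀ x, dA (adjoint dA x) = x := fun x => congr($hdA x)
  obtain ⟨f, g⟩ := p
  rw [hU, hTtil, hL, hL]
  simp only [comp_apply, sub_apply, smul_apply, one_apply_eq_self, map_add, map_smul, map_sub,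
    map_neg, hdA', hS]
  module

theorem Ttil_Ttil_of_L_eq_zero (hdA : dA ∘L adjoint dA = 1) (hS : ∀ x, S (S x) = x)
    (hL : ∀ f g, L (f, g) = adjoint dA f + S (adjoint dA g))
    (hTtil : ∀ f g, Ttil (f, g) = (-g, f + (2 : 𝕜) • dA (S (adjoint dA g)))) {p : K₁ × K₁}
    (hp : L p = 0) : Ttil (Ttil p) = p := by
  have hdA' : ∀ x, dA (adjoint dA x) = x := fun x => congr($hdA x)
  obtain ⟨f, g⟩ := p
  rw [hL] at hp
  have hg : dA (S (adjoint dA g)) = -f := by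
    simpa [hdA', eq_neg_iff_add_eq_zero, add_comm] using congr(dA $hp)
  have hf : dA (S (adjoint dA f)) = -g := by
    simpa [hdA', hS, eq_neg_iff_add_eq_zero] using congr(dA (S $hp))
  rw [hTtil, hTtil]
  simp only [map_add, map_smul, map_neg, hg, hf, Prod.mk.injEq]
  constructor <;> module

theorem L_eq_zero_of_Ttil_eq_self (hdA : dA ∘L adjoint dA = 1) (hSu : S ∈ unitary (K₂ →L[𝕜] K₂))
    (hL : ∀ f g, L (f, g) = adjoint dA f + S (adjoint dA g))
    (hTtil : ∀ f g, Ttil (f, g) = (-g, f + (2 : 𝕜) • dA (S (adjoint dA g)))) {p : K₁ × K₁}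
    (hp : Ttil p = p) : L p = 0 := by
  obtain ⟨f, g⟩ := p
  rw [hTtil, Prod.mk.injEq] at hp
  obtain ⟨rfl, hg⟩ := hp
  have hg' : dA (S (adjoint dA g)) = g :=
    smul_right_injective K₁ (two_ne_zero (α := 𝕜)) (by linear_combination (norm := module) hg)
  have hSg : S (adjoint dA g) = adjoint dA g := eq_adjoint_apply_of_apply_eq hdA hg' <| by
    rw [norm_map_of_mem_unitary hSu, norm_adjoint_apply_of_comp_adjoint_eq_one hdA]
  rw [hL, hSg, map_neg, neg_add_cancel]

theorem L_eq_zero_of_Ttil_eq_neg (hdA : dA ∘L adjoint dA = 1) (hSu : S ∈ unitary (K₂ →L[𝕜] K₂))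
    (hL : ∀ f g, L (f, g) = adjoint dA f + S (adjoint dA g))
    (hTtil : ∀ f g, Ttil (f, g) = (-g, f + (2 : 𝕜) • dA (S (adjoint dA g)))) {p : K₁ × K₁}
    (hp : Ttil p = -p) : L p = 0 := by
  obtain ⟨f, g⟩ := p
  rw [hTtil, Prod.neg_mk, Prod.mk.injEq, neg_inj] at hp
  obtain ⟨rfl, hg⟩ := hp
  have hg' : dA (S (adjoint dA g)) = -g :=
    smul_right_injective K₁ (two_ne_zero (α := 𝕜)) (by linear_combination (norm := module) hg)
  have hSg : S (adjoint dA g) = adjoint dA (-g) := eq_adjoint_apply_of_apply_eq hdA hg' <| by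
    rw [norm_map_of_mem_unitary hSu, norm_adjoint_apply_of_comp_adjoint_eq_one hdA, norm_neg]
  rw [hL, hSg, map_neg, add_neg_cancel]

end

theorem stmt17 {K₁ K₂ : Type*}
    [NormedAddCommGroup K₁] [InnerProductSpace ℂ K₁] [FiniteDimensional ℂ K₁]
    [NormedAddCommGroup K₂] [InnerProductSpace ℂ K₂] [FiniteDimensional ℂ K₂]
    (S : K₂ →L[ℂ] K₂) (hS : IsSelfAdjoint S) (hSu : S ∈ unitary (K₂ →L[ℂ] K₂))
    (dA : K₂ →L[ℂ] K₁) (h : dA ∘L adjoint dA = 1)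
    (dB : K₂ →L[ℂ] K₁) (hdB : dB = dA ∘L S)
    (T : K₁ →L[ℂ] K₁) (hT : T = dA ∘L adjoint dB)
    (U : K₂ →L[ℂ] K₂) (hU : U = S ∘L ((2:ℂ) • (adjoint dA ∘L dA) - 1))
    (L : K₁ × K₁ →L[ℂ] K₂) (hL : ∀ f g : K₁, L (f, g) = adjoint dA f + adjoint dB g)
    (Ttil : K₁ × K₁ →L[ℂ] K₁ × K₁)
    (hTtil : ∀ f g : K₁, Ttil (f, g) = (-g, f + (2:ℂ) • T g))
    (ψ : K₁ × K₁) :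
    (U (L ψ) = L ψ ∧ L ψ ≠ 0
      ↔ ((((1 - Ttil) ^ 2) ∘L (1 + Ttil)) ψ = 0 ∧ L ψ ≠ 0)) ∧
    (U (L ψ) = L ψ ∧ L ψ ≠ 0
      ↔ ∃ ψ₁ ψ₂ : K₁ × K₁, ψ = ψ₁ + ψ₂ ∧
          (((1 - Ttil) ^ 2 : K₁ × K₁ →L[ℂ] K₁ × K₁)) ψ₁ = 0 ∧ (1 - Ttil) ψ₁ ≠ 0 ∧ ψ₁ ≠ 0 ∧ L ψ₂ = 0) := by
  have hSS : ∀ x, S (S x) = x := by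
    have hSS : S * S = 1 := by simpa only [hS.star_eq] using Unitary.star_mul_self_of_mem hSu
    exact fun x => congr($hSS x)
  have hdB' : ∀ g, adjoint dB g = S (adjoint dA g) := by
    intro g
    rw [hdB, adjoint_comp, ← star_eq_adjoint S, hS.star_eq, comp_apply]
  have hL' : ∀ f g, L (f, g) = adjoint dA f + S (adjoint dA g) := by
    intro f g; rw [hL, hdB']
  have hTtil' : ∀ f g, Ttil (f, g) = (-g, f + (2 : ℂ) • dA (S (adjoint dA g))) := by
    intro f g; rw [hTtil, hT, comp_apply, hdB']
  have hUL := U_L_eq_L_Ttil h hSS hU hL' hTtil'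
  have hmaps : ∀ p, L p = 0 → L (Ttil p) = 0 := fun p hp => by rw [← hUL, hp, map_zero]
  have hinvol := fun p => Ttil_Ttil_of_L_eq_zero (p := p) h hSS hL' hTtil'
  have hfix := fun p => L_eq_zero_of_Ttil_eq_self (p := p) h hSu hL' hTtil'
  have hanti := fun p => L_eq_zero_of_Ttil_eq_neg (p := p) h hSu hL' hTtil'
  have hfixed : U (L ψ) = L ψ ↔ L ((1 - Ttil) ψ) = 0 := by
    rw [hUL, sub_apply, one_apply_eq_self, map_sub, sub_eq_zero, eq_comm]
  rw [hfixed]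
  exact ⟨and_congr_left' (map_one_sub_apply_eq_zero_iff (t := (Ttil : K₁ × K₁ →ₗ[ℂ] K₁ × K₁))
      (l := (L : K₁ × K₁ →ₗ[ℂ] K₂)) two_ne_zero hinvol hfix hanti ψ),
    map_one_sub_apply_eq_zero_and_ne_zero_iff (t := (Ttil : K₁ × K₁ →ₗ[ℂ] K₁ × K₁))
      (l := (L : K₁ × K₁ →ₗ[ℂ] K₂)) two_ne_zero hmaps hinvol hfix hanti ψ⟩
end

section
/- The eigenspace of U restricted to 𝓛 for an eigenvalue λ ∉ {±1} is given by ker(λI - U|_𝓛) = {d_A* f - λ d_B* f : f ∈ ker(μI - T)} where μ = (λ + λ⁻¹)/2. -/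
/-!
With `a = d_A`, `b = d_A*` (so `d_B* = S b`), write `P = b ∘ a`, a projection since `a ∘ b = 1`,
and `W = S (2P - 1)`. On vectors `b f` and `S (b f)` the walk acts by `W (b f) = S (b f)` and
`W (S (b f)) = 2 S (b (T f)) - b f`, where `T = a S b`; so it preserves `span {b f, S (b f)}`
whenever `f` is an eigenvector of `T`, and the eigenvalue `μ` of `T` and the eigenvalues `λ, λ⁻¹`
of `W` on that plane are related by `2μ = λ + λ⁻¹`. Conversely, applying `a` to `W φ = λ φ` shows that `a φ` is an eigenvector of `T`,
and for `λ² ≠ 1` the eigenvector `φ` is recovered from `P φ` and `S P φ`.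
-/

open ContinuousLinearMap Function

namespace CoinWalk

variable {𝕜 M N : Type*} [Field 𝕜] [AddCommGroup M] [Module 𝕜 M] [AddCommGroup N] [Module 𝕜 N]
  (a : M →ₗ[𝕜] N) (b : N →ₗ[𝕜] M) (S : M →ₗ[𝕜] M)

def walk : M →ₗ[𝕜] M := S ∘ₗ ((2 : 𝕜) • (b ∘ₗ a) - LinearMap.id)

def discriminant : N →ₗ[𝕜] N := a ∘ₗ S ∘ₗ b

@[simp]
lemma walk_apply (φ : M) : walk a b S φ = S ((2 : 𝕜) • b (a φ) - φ) := by
  simp [walk]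

@[simp]
lemma discriminant_apply (f : N) : discriminant a b S f = a (S (b f)) := rfl

variable {a b S}

lemma walk_apply_section (hab : LeftInverse a b) (f : N) : walk a b S (b f) = S (b f) := by
  rw [walk_apply, hab f]
  congr 1
  module

lemma walk_apply_reflection_section (hS : Involutive S) (f : N) :
    walk a b S (S (b f)) = (2 : 𝕜) • S (b (discriminant a b S f)) - b f := by
  rw [walk_apply, discriminant_apply, map_sub, map_smul, hS]

theorem walk_eigenvector_of_discriminant_eigenvector [NeZero (2 : 𝕜)]
    (hab : LeftInverse a b) (hS : Involutive S) {lam : 𝕜} (h0 : lam ≠ 0) {f : N}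
    (hf : discriminant a b S f = ((lam + lam⁻¹) / 2) • f) :
    walk a b S (b f - lam • S (b f)) = lam • (b f - lam • S (b f)) := by
  rw [map_sub, map_smul, walk_apply_section hab, walk_apply_reflection_section hS, hf, map_smul,
    map_smul]
  match_scalars
  · field_simp
    ring
  · ring

lemma reflection_eq_of_walk_eq_smul (hS : Involutive S) {lam : 𝕜} {φ : M}
    (hφ : walk a b S φ = lam • φ) : (2 : 𝕜) • b (a φ) - φ = lam • S φ := by
  rw [← hS ((2 : 𝕜) • b (a φ) - φ), ← walk_apply, hφ, map_smul]

lemma smul_eq_of_walk_eq_smul (hS : Involutive S) {lam : 𝕜} {φ : M}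
    (hφ : walk a b S φ = lam • φ) :
    (1 - lam ^ 2) • φ = (2 : 𝕜) • (b (a φ) - lam • S (b (a φ))) := by
  have hSφ := reflection_eq_of_walk_eq_smul hS hφ
  rw [walk_apply] at hφ
  have hSPφ : (2 : 𝕜) • S (b (a φ)) - S φ = lam • φ := by
    rw [← hφ, map_sub, map_smul]
  linear_combination (norm := module) lam • hSPφ - hSφ

lemma discriminant_apply_of_walk_eq_smul (hab : LeftInverse a b) (hS : Involutive S) {lam : 𝕜}
    {φ : M} (hφ : walk a b S φ = lam • φ) :
    (2 * lam) • discriminant a b S (a φ) = (1 + lam ^ 2) • a φ := by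
  have haSφ : a φ = lam • a (S φ) := by
    have := congr(a $(reflection_eq_of_walk_eq_smul hS hφ))
    simp only [map_sub, map_smul, hab _] at this
    linear_combination (norm := module) this
  have haSPφ : (2 : 𝕜) • a (S (b (a φ))) - a (S φ) = lam • a φ := by
    have := congr(a $hφ)
    simpa only [walk_apply, map_sub, map_smul] using this
  rw [discriminant_apply]
  linear_combination (norm := module) lam • haSPφ - haSφ

theorem exists_discriminant_eigenvector_of_walk_eigenvector [NeZero (2 : 𝕜)]
    (hab : LeftInverse a b) (hS : Involutive S) {lam : 𝕜} (h0 : lam ≠ 0) (h1 : lam ^ 2 ≠ 1)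
    {φ : M} (hφ : walk a b S φ = lam • φ) :
    ∃ f : N, discriminant a b S f = ((lam + lam⁻¹) / 2) • f ∧ φ = b f - lam • S (b f) := by
  have hc : 1 - lam ^ 2 ≠ 0 := sub_ne_zero.mpr (Ne.symm h1)
  have hT : discriminant a b S (a φ) = ((lam + lam⁻¹) / 2) • a φ := by
    apply smul_right_injective N (mul_ne_zero two_ne_zero h0)
    simp only [discriminant_apply_of_walk_eq_smul hab hS hφ, smul_smul]
    congr 1
    field_simp
    ring
  refine ⟨(2 / (1 - lam ^ 2)) • a φ, by rw [map_smul, hT, smul_comm], ?_⟩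
  apply smul_right_injective M hc
  simp only [smul_eq_of_walk_eq_smul hS hφ, map_smul]
  match_scalars <;> field_simp

end CoinWalk

open CoinWalk

theorem stmt18 {K₁ K₂ : Type*}
    [NormedAddCommGroup K₁] [InnerProductSpace ℂ K₁] [FiniteDimensional ℂ K₁]
    [NormedAddCommGroup K₂] [InnerProductSpace ℂ K₂] [FiniteDimensional ℂ K₂]
    (S : K₂ →L[ℂ] K₂) (hS : IsSelfAdjoint S) (hSu : S ∈ unitary (K₂ →L[ℂ] K₂))
    (dA : K₂ →L[ℂ] K₁) (h : dA ∘L adjoint dA = 1)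
    (dB : K₂ →L[ℂ] K₁) (hdB : dB = dA ∘L S)
    (T : K₁ →L[ℂ] K₁) (hT : T = dA ∘L adjoint dB)
    (U : K₂ →L[ℂ] K₂) (hU : U = S ∘L ((2:ℂ) • (adjoint dA ∘L dA) - 1))
    (lam : ℂ) (h0 : lam ≠ 0) (h1 : lam ≠ 1) (h2 : lam ≠ -1) :
    {φ : K₂ | φ ∈ LinearMap.range (adjoint dA : K₁ →ₗ[ℂ] K₂) ⊔ LinearMap.range (adjoint dB : K₁ →ₗ[ℂ] K₂) ∧
        U φ = lam • φ}
      = {φ : K₂ | ∃ f : K₁, T f = ((lam + lam⁻¹) / 2) • f ∧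
          φ = adjoint dA f - lam • adjoint dB f} := by
  have hdA : LeftInverse dA (adjoint dA) := fun f => congr($h f)
  have hSinv : Involutive S := fun φ => by
    simpa [hS.star_eq] using congr($(Unitary.star_mul_self_of_mem hSu) φ)
  have hdB' : ∀ f, adjoint dB f = S (adjoint dA f) := fun f => by
    rw [hdB, adjoint_comp, ← star_eq_adjoint S, hS.star_eq]
    rfl
  have hU' : ∀ φ, U φ = walk (dA : K₂ →ₗ[ℂ] K₁) (adjoint dA : K₁ →ₗ[ℂ] K₂) S φ := fun φ => by
    simp [hU]
  have hT' : ∀ f, T f = discriminant (dA : K₂ →ₗ[ℂ] K₁) (adjoint dA : K₁ →ₗ[ℂ] K₂) S f := fun f => by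
    simp [hT, hdB']
  have hlam : lam ^ 2 ≠ 1 := sq_ne_one_iff.mpr ⟨h1, h2⟩
  ext φ
  simp only [Set.mem_ofPred_eq, hU', hT', hdB']
  constructor
  · rintro ⟨-, hφ⟩
    exact exists_discriminant_eigenvector_of_walk_eigenvector hdA hSinv h0 hlam hφ
  · rintro ⟨f, hf, rfl⟩
    refine ⟨Submodule.sub_mem _ (Submodule.mem_sup_left ⟨f, rfl⟩)
      (Submodule.smul_mem _ _ (Submodule.mem_sup_right ⟨f, hdB' f⟩)), ?_⟩
    exact walk_eigenvector_of_discriminant_eigenvector hdA hSinv h0 hf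
end
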